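/- For 0 ≤ α ≤ 1/2, the function f(z) = z/(1-(1-2α)z)^{2(1-α)/(1-2α)} for α ≠ 1/2 (and f(z) = z e^z for α = 1/2) satisfies f(0) = 0, f'(0) = 1, and Re(f(z)/(z f'(z))) ≥ α for all z ∈ D ∖ {0}; moreover its fourth Taylor coefficient equals (1-α)(3-4α)(4-6α)/3, showing sharpness of the fourth-coefficient bound for almost starlike functions of order α. -/

import Mathlib

/-!
Write `f z = z * g z` with `c = 1 - 2α` and `g z = (1 - c z) ^ (-(1 + c) / c)` (`g = exp` when
`c = 0`). Then `g 0 = 1` and `(1 - c z) g' = (1 + c) g`, which turns the quotient into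
`f / (z f') = (1 - c z) / (1 + z) = -c + (1 + c) / (1 + z)`; since `Re (1 / (1 + z)) > 1 / 2` on the
disc, its real part is at least `-c + (1 + c) / 2 = α`. Differentiating the differential equation
`n` times at `0` gives `g⁽ⁿ⁺¹⁾(0) = (1 + (n + 1) c) g⁽ⁿ⁾(0)`, so
`f⁽⁴⁾(0) = 4 g'''(0) = 4 (1 + c) (1 + 2c) (1 + 3c)`.
-/

open Complex Metric Filter Topology

theorem div_mul_deriv_id_mul_eq {𝕜 : Type*} [NontriviallyNormedField 𝕜] {g : 𝕜 → 𝕜} {c z : 𝕜}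
    (hg : DifferentiableAt 𝕜 g z) (hz : z ≠ 0) (hgz : g z ≠ 0) (h1z : 1 + z ≠ 0)
    (hode : (1 - c * z) * deriv g z = (1 + c) * g z) :
    z * g z / (z * deriv (fun w => w * g w) z) = (1 - c * z) / (1 + z) := by
  have hderiv : deriv (fun w => w * g w) z = g z + z * deriv g z := by
    rw [deriv_fun_mul differentiableAt_fun_id hg, deriv_id'', one_mul]
  have hode' : (1 - c * z) * deriv (fun w => w * g w) z = (1 + z) * g z := by
    rw [hderiv]; linear_combination z * hode
  have hf' : deriv (fun w => w * g w) z ≠ 0 := by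
    rintro h
    rw [h, mul_zero] at hode'
    exact mul_ne_zero h1z hgz hode'.symm
  rw [div_eq_div_iff (mul_ne_zero hz hf') h1z]
  linear_combination (-z) * hode'

theorem one_add_ne_zero_of_norm_lt_one {R : Type*} [NormedRing R] [NormOneClass R] {x : R}
    (hx : ‖x‖ < 1) : 1 + x ≠ 0 := by
  rintro h
  rw [← neg_eq_of_add_eq_zero_right h, norm_neg, norm_one] at hx
  exact lt_irrefl _ hx

namespace Complex

theorem one_half_lt_re_inv_one_add {z : ℂ} (hz : ‖z‖ < 1) : 1 / 2 < (1 + z)⁻¹.re := by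
  have hnorm : z.re ^ 2 + z.im ^ 2 < 1 := by
    have hsq := Complex.sq_norm z
    rw [normSq_apply] at hsq
    nlinarith [norm_nonneg z]
  have hpos : 0 < normSq (1 + z) := by
    rw [normSq_apply]; simp only [add_re, one_re, add_im, one_im]; nlinarith
  rw [inv_re, lt_div_iff₀ hpos, normSq_apply]
  simp only [add_re, one_re, add_im, one_im]
  nlinarith

theorem le_re_one_sub_mul_div_one_add {c : ℝ} (hc : -1 ≤ c) {z : ℂ} (hz : ‖z‖ < 1) :
    (1 - c) / 2 ≤ ((1 - c * z) / (1 + z)).re := by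
  have hsplit : (1 - c * z) / (1 + z) = -c + (1 + c : ℝ) * (1 + z)⁻¹ := by
    field_simp [one_add_ne_zero_of_norm_lt_one hz]; push_cast; ring
  rw [hsplit, add_re, neg_re, ofReal_re, re_ofReal_mul]
  nlinarith [one_half_lt_re_inv_one_add hz]

theorem one_sub_mul_mem_slitPlane {c z : ℂ} (hc : ‖c‖ ≤ 1) (hz : ‖z‖ < 1) :
    1 - c * z ∈ slitPlane := by
  refine mem_slitPlane_iff.mpr (Or.inl ?_)
  have : ‖c * z‖ < 1 := by
    rw [norm_mul]; exact (mul_le_of_le_one_left (norm_nonneg z) hc).trans_lt hz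
  rw [sub_re, one_re]
  linarith [re_le_norm (c * z)]

theorem hasDerivAt_one_sub_mul_cpow {c z : ℂ} (B : ℂ) (hz : 1 - c * z ∈ slitPlane) :
    HasDerivAt (fun w => (1 - c * w) ^ B) (-(B * c) * (1 - c * z) ^ (B - 1)) z := by
  have h : HasDerivAt (fun w : ℂ => 1 - c * w) (-c) z := by
    simpa using ((hasDerivAt_id z).const_mul c).const_sub 1
  convert h.cpow_const hz using 1
  ring

end Complex

section IteratedDeriv

variable {𝕜 : Type*} [NontriviallyNormedField 𝕜]

theorem iteratedDeriv_succ_id_mul_zero {h : 𝕜 → 𝕜} (n : ℕ) (hh : ContDiffAt 𝕜 (n + 1) h 0) :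
    iteratedDeriv (n + 1) (fun z => z * h z) 0 = (n + 1) * iteratedDeriv n h 0 := by
  rw [iteratedDeriv_fun_mul (f := fun z => z) contDiffAt_id hh, Finset.sum_range_succ',
    Finset.sum_range_succ']
  simp [iteratedDeriv_fun_id_zero]

variable [CompleteSpace 𝕜]

theorem iteratedDeriv_succ_zero_of_ode {g : 𝕜 → 𝕜} {b c : 𝕜} (hg : AnalyticAt 𝕜 g 0)
    (hode : (fun z => (1 - c * z) * deriv g z) =ᶠ[𝓝 0] fun z => b * g z) (n : ℕ) :
    iteratedDeriv (n + 1) g 0 = (b + n * c) * iteratedDeriv n g 0 := by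
  rcases n with _ | n
  · simpa using hode.eq_of_nhds
  have hg' : ContDiffAt 𝕜 ⊤ (deriv g) 0 := hg.deriv.contDiffAt
  have key := hode.iteratedDeriv_eq (n + 1)
  simp only [sub_mul, one_mul, mul_assoc] at key
  rw [iteratedDeriv_fun_sub (hg'.of_le le_top)
      ((contDiffAt_const.mul (contDiffAt_fun_id.mul hg')).of_le le_top),
    iteratedDeriv_const_mul_field, iteratedDeriv_const_mul_field,
    iteratedDeriv_succ_id_mul_zero _ (hg'.of_le le_top)] at key
  simp only [← iteratedDeriv_succ'] at key
  push_cast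
  linear_combination key

theorem iteratedDeriv_zero_of_ode {g : 𝕜 → 𝕜} {b c : 𝕜} (hg : AnalyticAt 𝕜 g 0)
    (hode : (fun z => (1 - c * z) * deriv g z) =ᶠ[𝓝 0] fun z => b * g z) (n : ℕ) :
    iteratedDeriv n g 0 = (∏ k ∈ Finset.range n, (b + k * c)) * g 0 := by
  induction n with
  | zero => simp
  | succ n ih => rw [iteratedDeriv_succ_zero_of_ode hg hode, ih, Finset.prod_range_succ]; ring

end IteratedDeriv

structure IsExtremalFactor (c : ℝ) (g : ℂ → ℂ) : Prop where
  map_zero : g 0 = 1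
  differentiableOn : DifferentiableOn ℂ g (ball 0 1)
  ne_zero : ∀ z ∈ ball (0 : ℂ) 1, g z ≠ 0
  ode : ∀ z ∈ ball (0 : ℂ) 1, (1 - c * z) * deriv g z = (1 + c) * g z

namespace IsExtremalFactor

variable {c : ℝ} {g : ℂ → ℂ}

theorem exp : IsExtremalFactor 0 Complex.exp where
  map_zero := Complex.exp_zero
  differentiableOn := differentiable_exp.differentiableOn
  ne_zero z _ := exp_ne_zero z
  ode z _ := by simp

theorem one_sub_mul_cpow {B : ℂ} (hc0 : 0 ≤ c) (hc1 : c ≤ 1) (hB : B * c = -(1 + c)) :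
    IsExtremalFactor c fun z => (1 - c * z) ^ B := by
  have hslit : ∀ z ∈ ball (0 : ℂ) 1, 1 - c * z ∈ slitPlane := fun z hz =>
    one_sub_mul_mem_slitPlane (by rwa [norm_real, Real.norm_of_nonneg hc0])
      (mem_ball_zero_iff.mp hz)
  refine ⟨by simp, fun z hz => ?_, fun z hz => ?_, fun z hz => ?_⟩
  · exact (hasDerivAt_one_sub_mul_cpow B (hslit z hz)).differentiableAt.differentiableWithinAt
  · exact cpow_ne_zero_iff.mpr (Or.inl (slitPlane_ne_zero (hslit z hz)))
  · have hne := slitPlane_ne_zero (hslit z hz)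
    rw [(hasDerivAt_one_sub_mul_cpow B (hslit z hz)).deriv, hB, cpow_sub _ _ hne, cpow_one]
    field_simp

theorem analyticAt_zero (hg : IsExtremalFactor c g) : AnalyticAt ℂ g 0 :=
  hg.differentiableOn.analyticAt (ball_mem_nhds 0 one_pos)

theorem iteratedDeriv_zero_eq (hg : IsExtremalFactor c g) (n : ℕ) :
    iteratedDeriv n g 0 = ∏ k ∈ Finset.range n, (1 + c + k * c : ℂ) := by
  have hode : (fun z => (1 - c * z) * deriv g z) =ᶠ[𝓝 0] fun z => (1 + c) * g z :=
    eventually_of_mem (ball_mem_nhds 0 one_pos) hg.ode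
  rw [iteratedDeriv_zero_of_ode hg.analyticAt_zero hode, hg.map_zero, mul_one]

theorem le_re_div_mul_deriv (hg : IsExtremalFactor c g) (hc : -1 ≤ c) {z : ℂ}
    (hz : z ∈ ball (0 : ℂ) 1) (hz0 : z ≠ 0) :
    (1 - c) / 2 ≤ (z * g z / (z * deriv (fun w => w * g w) z)).re := by
  have hz1 : ‖z‖ < 1 := mem_ball_zero_iff.mp hz
  rw [div_mul_deriv_id_mul_eq ((hg.differentiableOn z hz).differentiableAt
    (isOpen_ball.mem_nhds hz)) hz0 (hg.ne_zero z hz) (one_add_ne_zero_of_norm_lt_one hz1)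
    (hg.ode z hz)]
  exact le_re_one_sub_mul_div_one_add hc hz1

end IsExtremalFactor

theorem stmt_19 (α : ℝ) (hα0 : 0 ≤ α) (hα1 : α ≤ 1/2)
    (f : ℂ → ℂ)
    (hf : ∀ z : ℂ, f z = if α = 1/2 then z * Complex.exp z
      else z * (1 - (1 - 2 * (α:ℂ)) * z) ^ (-(2 * (1 - (α:ℂ)) / (1 - 2 * (α:ℂ))))) :
    f 0 = 0 ∧ deriv f 0 = 1 ∧
      (∀ z ∈ ball (0:ℂ) 1, z ≠ 0 → α ≤ (f z / (z * deriv f z)).re) ∧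
      iteratedDeriv 4 f 0 / (Nat.factorial 4) =
        ((1 - α) * (3 - 4 * α) * (4 - 6 * α) / 3 : ℂ) := by
  obtain ⟨g, rfl, hg⟩ : ∃ g, f = (fun z => z * g z) ∧ IsExtremalFactor (1 - 2 * α) g := by
    by_cases h : α = 1 / 2
    · refine ⟨Complex.exp, funext fun z => by simp [hf, h], ?_⟩
      convert IsExtremalFactor.exp using 1
      norm_num [h]
    · refine ⟨_, funext fun z => by rw [hf, if_neg h], ?_⟩
      have hc : (1 - 2 * α : ℂ) ≠ 0 := by
        exact_mod_cast fun h' : 1 - 2 * α = 0 => h (by linarith)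
      convert IsExtremalFactor.one_sub_mul_cpow (c := 1 - 2 * α) (by linarith) (by linarith) ?_
        using 4
      · push_cast; ring
      · push_cast; field_simp; ring
  have hg4 : ContDiffAt ℂ 4 g 0 := hg.analyticAt_zero.contDiffAt
  refine ⟨by simp, ?_, fun z hz hz0 => ?_, ?_⟩
  · rw [← iteratedDeriv_one, iteratedDeriv_succ_id_mul_zero 0 (hg4.of_le (by norm_num))]
    simp [hg.map_zero]
  · simpa using hg.le_re_div_mul_deriv (by linarith) hz hz0
  · rw [iteratedDeriv_succ_id_mul_zero 3 hg4, hg.iteratedDeriv_zero_eq]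
    simp [Finset.prod_range_succ, Nat.factorial]
    ring
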